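/- arXiv:2311.15670 — 2 statements merged into one kernel-verified Lean document; each statement's English description precedes it below -/
import Mathlib

section
/- Let P1, P2 be processes and let 𝒫 be any of the properties BrSNNI, BrNDC, SBrSNNI, P_BrNDC, SBrNDC. If P1 ≈_b P2, then P1 ∈ 𝒫 if and only if P2 ∈ 𝒫 (each branching-bisimilarity-based noninterference property is preserved by branching bisimilarity). -/
namespace SecurityNI

/-- Process terms: `0`, action prefix (`none` = τ, `some a` = observable action),
choice, CSP-style parallel composition with synchronization set, restriction,
hiding, and constants (whose defining equations are given by an environment). -/
inductive Proc (A : Type) (C : Type) : Type where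
  | nil : Proc A C
  | pre : Option A → Proc A C → Proc A C
  | choice : Proc A C → Proc A C → Proc A C
  | par : Set A → Proc A C → Proc A C → Proc A C
  | restrict : Proc A C → Set A → Proc A C
  | hide : Proc A C → Set A → Proc A C
  | const : C → Proc A C

variable {A C : Type}

/-- A process term is guarded when every constant occurrence is in the scope
of an action prefix operator. -/
def Guarded : Proc A C → Prop
  | .nil => True
  | .pre _ _ => True
  | .choice p q => Guarded p ∧ Guarded q
  | .par _ p q => Guarded p ∧ Guarded q
  | .restrict p _ => Guarded p
  | .hide p _ => Guarded p
  | .const _ => False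

/-- Operational semantics, parameterized by the defining equations `env` of
the constants.  Labels are `Option A`, with `none` playing the role of τ. -/
inductive Trans (env : C → Proc A C) : Proc A C → Option A → Proc A C → Prop where
  | pre (a : Option A) (p : Proc A C) : Trans env (.pre a p) a p
  | choiceL {p q a p'} (h : Trans env p a p') : Trans env (.choice p q) a p'
  | choiceR {p q a q'} (h : Trans env q a q') : Trans env (.choice p q) a q'
  | parL {L p q a p'} (h : Trans env p a p') (hn : ∀ x, a = some x → x ∉ L) :
      Trans env (.par L p q) a (.par L p' q)
  | parR {L p q a q'} (h : Trans env q a q') (hn : ∀ x, a = some x → x ∉ L) :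
      Trans env (.par L p q) a (.par L p q')
  | sync {L p q x p' q'} (h1 : Trans env p (some x) p') (h2 : Trans env q (some x) q')
      (hx : x ∈ L) : Trans env (.par L p q) (some x) (.par L p' q')
  | res {p a p' L} (h : Trans env p a p') (hn : ∀ x, a = some x → x ∉ L) :
      Trans env (.restrict p L) a (.restrict p' L)
  | hideIn {p x p' L} (h : Trans env p (some x) p') (hx : x ∈ L) :
      Trans env (.hide p L) none (.hide p' L)
  | hideOut {p a p' L} (h : Trans env p a p') (hn : ∀ x, a = some x → x ∉ L) :
      Trans env (.hide p L) a (.hide p' L)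
  | const {c a p'} (h : Trans env (env c) a p') : Trans env (.const c) a p'

section LTS

variable {S : Type} (tr : S → Option A → S → Prop)

/-- Finitely many (possibly zero) τ-transitions. -/
def TauStar : S → S → Prop :=
  Relation.ReflTransGen (fun s s' => tr s none s')

/-- `B` is a branching bisimulation. -/
def IsBranchingBisim (B : S → S → Prop) : Prop :=
  Symmetric B ∧
    ∀ s1 s2, B s1 s2 → ∀ a s1', tr s1 a s1' →
      (a = none ∧ B s1' s2) ∨
      (∃ s2b s2', TauStar tr s2 s2b ∧ tr s2b a s2' ∧ B s1 s2b ∧ B s1' s2')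

/-- Branching bisimilarity `≈_b`. -/
def BrBisim (s1 s2 : S) : Prop :=
  ∃ B, IsBranchingBisim tr B ∧ B s1 s2

/-- `B` is a weak bisimulation. -/
def IsWeakBisim (B : S → S → Prop) : Prop :=
  Symmetric B ∧
    ∀ s1 s2, B s1 s2 →
      (∀ s1', tr s1 none s1' → ∃ s2', TauStar tr s2 s2' ∧ B s1' s2') ∧
      (∀ x s1', tr s1 (some x) s1' →
        ∃ t t' s2', TauStar tr s2 t ∧ tr t (some x) t' ∧ TauStar tr t' s2' ∧ B s1' s2')

/-- Weak bisimilarity `≈`. -/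
def WeakBisim (s1 s2 : S) : Prop :=
  ∃ B, IsWeakBisim tr B ∧ B s1 s2

/-- Reachability via finitely many transitions. -/
def Reach : S → S → Prop :=
  Relation.ReflTransGen (fun s s' => ∃ a, tr s a s')

end LTS

section Security

variable (env : C → Proc A C) (AH : Set A)

/-- `P ∈ BrSNNI` iff `P∖A_H ≈_b P/A_H`. -/
def BrSNNI (p : Proc A C) : Prop :=
  BrBisim (Trans env) (.restrict p AH) (.hide p AH)

/-- All processes reachable from `q` perform only actions in `AH`. -/
def HighOnly (q : Proc A C) : Prop :=
  ∀ q', Reach (Trans env) q q' → ∀ a q'', Trans env q' a q'' → ∃ h ∈ AH, a = some h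

/-- `P ∈ BrNDC` iff `P∖A_H ≈_b ((P ∥_L Q)/L)∖A_H` for every high-level `Q`
and every `L ⊆ A_H`. -/
def BrNDC (p : Proc A C) : Prop :=
  ∀ q, HighOnly env AH q → ∀ L, L ⊆ AH →
    BrBisim (Trans env) (.restrict p AH) (.restrict (.hide (.par L p q) L) AH)

/-- `P ∈ SBrSNNI` iff every reachable process is BrSNNI. -/
def SBrSNNI (p : Proc A C) : Prop :=
  ∀ p', Reach (Trans env) p p' → BrSNNI env AH p'

/-- `P ∈ P_BrNDC` iff every reachable process is BrNDC. -/
def PBrNDC (p : Proc A C) : Prop :=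
  ∀ p', Reach (Trans env) p p' → BrNDC env AH p'

/-- `P ∈ SBrNDC` iff for every reachable `P'` and every high transition
`P' --h→ P''`, `P'∖A_H ≈_b P''∖A_H`. -/
def SBrNDC (p : Proc A C) : Prop :=
  ∀ p' p'', Reach (Trans env) p p' → ∀ h ∈ AH, Trans env p' (some h) p'' →
    BrBisim (Trans env) (.restrict p' AH) (.restrict p'' AH)

/-- `P ∈ BSNNI` iff `P∖A_H ≈ P/A_H`. -/
def BSNNI (p : Proc A C) : Prop :=
  WeakBisim (Trans env) (.restrict p AH) (.hide p AH)

/-- `P ∈ BNDC` iff `P∖A_H ≈ ((P ∥_L Q)/L)∖A_H` for every high-level `Q`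
and every `L ⊆ A_H`. -/
def BNDC (p : Proc A C) : Prop :=
  ∀ q, HighOnly env AH q → ∀ L, L ⊆ AH →
    WeakBisim (Trans env) (.restrict p AH) (.restrict (.hide (.par L p q) L) AH)

/-- `P ∈ SBSNNI` iff every reachable process is BSNNI. -/
def SBSNNI (p : Proc A C) : Prop :=
  ∀ p', Reach (Trans env) p p' → BSNNI env AH p'

/-- `P ∈ P_BNDC` iff every reachable process is BNDC. -/
def PBNDC (p : Proc A C) : Prop :=
  ∀ p', Reach (Trans env) p p' → BNDC env AH p'

/-- `P ∈ SBNDC` iff for every reachable `P'` and every high transition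
`P' --h→ P''`, `P'∖A_H ≈ P''∖A_H`. -/
def SBNDC (p : Proc A C) : Prop :=
  ∀ p' p'', Reach (Trans env) p p' → ∀ h ∈ AH, Trans env p' (some h) p'' →
    WeakBisim (Trans env) (.restrict p' AH) (.restrict p'' AH)

/-- No high-level actions occur in `p`: no process reachable from `p`
can perform a high-level action. -/
def NoHigh (p : Proc A C) : Prop :=
  ∀ p', Reach (Trans env) p p' → ∀ h ∈ AH, ∀ p'', ¬ Trans env p' (some h) p''

end Security

/-! ### Auxiliary theory: semi-branching bisimulations (Basten's technique) -/

section BBTheory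

variable {S A : Type} {tr : S → Option A → S → Prop}

/-- Semi-branching bisimulation (Basten). -/
def IsSemiBB (tr : S → Option A → S → Prop) (B : S → S → Prop) : Prop :=
  Symmetric B ∧ ∀ s1 s2, B s1 s2 → ∀ a s1', tr s1 a s1' →
    ∃ s2b s2', TauStar tr s2 s2b ∧ ((a = none ∧ s2' = s2b) ∨ tr s2b a s2') ∧
      B s1 s2b ∧ B s1' s2'

def SemiBisim (tr : S → Option A → S → Prop) (s1 s2 : S) : Prop :=
  ∃ B, IsSemiBB tr B ∧ B s1 s2

theorem br_isSemi {B : S → S → Prop} (h : IsBranchingBisim tr B) : IsSemiBB tr B := by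
  refine ⟨h.1, fun s1 s2 hB a s1' ht => ?_⟩
  rcases h.2 s1 s2 hB a s1' ht with ⟨rfl, hB'⟩ | ⟨s2b, s2', h1, h2, h3, h4⟩
  · exact ⟨s2, s2, .refl, .inl ⟨rfl, rfl⟩, hB, hB'⟩
  · exact ⟨s2b, s2', h1, .inr h2, h3, h4⟩

theorem semiBisim_symm : Symmetric (SemiBisim tr) :=
  fun _ _ ⟨B, hB, h⟩ => ⟨B, hB, hB.1 h⟩

theorem isSemiBB_semiBisim : IsSemiBB tr (SemiBisim tr) := by
  refine ⟨semiBisim_symm, ?_⟩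
  rintro s1 s2 ⟨B, hB, h⟩ a s1' ht
  obtain ⟨s2b, s2', h1, h2, h3, h4⟩ := hB.2 s1 s2 h a s1' ht
  exact ⟨s2b, s2', h1, h2, ⟨B, hB, h3⟩, ⟨B, hB, h4⟩⟩

theorem tauStar_sim {B : S → S → Prop} (hB : IsSemiBB tr B) {s t s' : S} (h : B s t)
    (hs : TauStar tr s s') : ∃ t', TauStar tr t t' ∧ B s' t' := by
  induction hs with
  | refl => exact ⟨t, .refl, h⟩
  | tail _ hstep ih =>
      obtain ⟨t', ht', hB'⟩ := ih
      obtain ⟨tb, t'', h1, h2, _, h4⟩ := hB.2 _ _ hB' none _ hstep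
      rcases h2 with ⟨_, he⟩ | h2
      · exact ⟨tb, ht'.trans h1, he ▸ h4⟩
      · exact ⟨t'', (ht'.trans h1).tail h2, h4⟩

theorem semi_comp_step {B1 B2 : S → S → Prop} (h1 : IsSemiBB tr B1) (h2 : IsSemiBB tr B2)
    {x y z : S} {a : Option A} {x' : S} (hxy : B1 x y) (hyz : B2 y z) (ht : tr x a x') :
    ∃ zb z', TauStar tr z zb ∧ ((a = none ∧ z' = zb) ∨ tr zb a z') ∧
      (∃ w, B1 x w ∧ B2 w zb) ∧ (∃ w, B1 x' w ∧ B2 w z') := by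
  obtain ⟨yb, y', hy1, hy2, hy3, hy4⟩ := h1.2 x y hxy a x' ht
  obtain ⟨z0, hz0, hyz0⟩ := tauStar_sim h2 hyz hy1
  rcases hy2 with ⟨rfl, he⟩ | hstep
  · subst he
    exact ⟨z0, z0, hz0, .inl ⟨rfl, rfl⟩, ⟨y', hy3, hyz0⟩, ⟨y', hy4, hyz0⟩⟩
  · obtain ⟨zb, z', hz1, hz2, hz3, hz4⟩ := h2.2 yb z0 hyz0 a y' hstep
    exact ⟨zb, z', hz0.trans hz1, hz2, ⟨yb, hy3, hz3⟩, ⟨y', hy4, hz4⟩⟩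

theorem semiBisim_trans {s t u : S} (hst : SemiBisim tr s t) (htu : SemiBisim tr t u) :
    SemiBisim tr s u := by
  obtain ⟨B1, hB1, h1⟩ := hst
  obtain ⟨B2, hB2, h2⟩ := htu
  refine ⟨fun x z => (∃ y, B1 x y ∧ B2 y z) ∨ (∃ y, B2 x y ∧ B1 y z),
    ⟨?_, ?_⟩, .inl ⟨t, h1, h2⟩⟩
  · rintro x z (⟨y, ha, hb⟩ | ⟨y, ha, hb⟩)
    · exact .inr ⟨y, hB2.1 hb, hB1.1 ha⟩
    · exact .inl ⟨y, hB1.1 hb, hB2.1 ha⟩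
  · rintro x z (⟨y, ha, hb⟩ | ⟨y, ha, hb⟩) a x' ht
    · obtain ⟨zb, z', c1, c2, c3, c4⟩ := semi_comp_step hB1 hB2 ha hb ht
      exact ⟨zb, z', c1, c2, .inl c3, .inl c4⟩
    · obtain ⟨zb, z', c1, c2, c3, c4⟩ := semi_comp_step hB2 hB1 ha hb ht
      exact ⟨zb, z', c1, c2, .inr c3, .inr c4⟩

theorem semiBisim_stutter {x t y u : S} (h1 : SemiBisim tr x t) (h2 : TauStar tr t y)
    (h3 : TauStar tr y u) (h4 : SemiBisim tr x u) : SemiBisim tr x y := by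
  refine ⟨fun p q => SemiBisim tr p q ∨
      (∃ t u, SemiBisim tr p t ∧ TauStar tr t q ∧ TauStar tr q u ∧ SemiBisim tr p u) ∨
      (∃ t u, SemiBisim tr q t ∧ TauStar tr t p ∧ TauStar tr p u ∧ SemiBisim tr q u),
    ⟨?_, ?_⟩, .inr (.inl ⟨t, u, h1, h2, h3, h4⟩)⟩
  · rintro p q (h | ⟨t', u', a1, a2, a3, a4⟩ | ⟨t', u', a1, a2, a3, a4⟩)
    · exact .inl (semiBisim_symm h)
    · exact .inr (.inr ⟨t', u', a1, a2, a3, a4⟩)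
    · exact .inr (.inl ⟨t', u', a1, a2, a3, a4⟩)
  · rintro p q (h | ⟨t', u', a1, a2, a3, a4⟩ | ⟨t', u', a1, a2, a3, a4⟩) a p' ht
    · obtain ⟨qb, q', c1, c2, c3, c4⟩ := isSemiBB_semiBisim.2 p q h a p' ht
      exact ⟨qb, q', c1, c2, .inl c3, .inl c4⟩
    · obtain ⟨qb, q', c1, c2, c3, c4⟩ := isSemiBB_semiBisim.2 p u' a4 a p' ht
      exact ⟨qb, q', a3.trans c1, c2, .inl c3, .inl c4⟩
    · obtain ⟨q0, hq0, hpq0⟩ := tauStar_sim isSemiBB_semiBisim (semiBisim_symm a1) a2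
      obtain ⟨qb, q', c1, c2, c3, c4⟩ := isSemiBB_semiBisim.2 p q0 hpq0 a p' ht
      exact ⟨qb, q', hq0.trans c1, c2, .inl c3, .inl c4⟩

theorem isBB_semiBisim : IsBranchingBisim tr (SemiBisim tr) := by
  refine ⟨semiBisim_symm, fun s1 s2 h a s1' ht => ?_⟩
  obtain ⟨s2b, s2', h1, h2, h3, h4⟩ := isSemiBB_semiBisim.2 s1 s2 h a s1' ht
  rcases h2 with ⟨rfl, he⟩ | hstep
  · subst he
    rcases Relation.ReflTransGen.cases_tail h1 with rfl | ⟨v, hv1, hv2⟩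
    · exact .inl ⟨rfl, h4⟩
    · exact .inr ⟨v, s2', hv1, hv2,
        semiBisim_stutter h hv1 (Relation.ReflTransGen.single hv2) h3, h4⟩
  · exact .inr ⟨s2b, s2', h1, hstep, h3, h4⟩

theorem brBisim_iff_semi {s1 s2 : S} : BrBisim tr s1 s2 ↔ SemiBisim tr s1 s2 :=
  ⟨fun ⟨B, hB, h⟩ => ⟨B, br_isSemi hB, h⟩, fun h => ⟨_, isBB_semiBisim, h⟩⟩

theorem brBisim_refl (s : S) : BrBisim tr s s := by
  refine ⟨Eq, ⟨fun _ _ h => h.symm, ?_⟩, rfl⟩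
  rintro s1 _ rfl a s1' ht
  exact .inr ⟨s1, s1', .refl, ht, rfl, rfl⟩

theorem brBisim_symm {s1 s2 : S} (h : BrBisim tr s1 s2) : BrBisim tr s2 s1 :=
  let ⟨B, hB, hb⟩ := h; ⟨B, hB, hB.1 hb⟩

theorem brBisim_trans {s1 s2 s3 : S} (h1 : BrBisim tr s1 s2) (h2 : BrBisim tr s2 s3) :
    BrBisim tr s1 s3 :=
  brBisim_iff_semi.2 (semiBisim_trans (brBisim_iff_semi.1 h1) (brBisim_iff_semi.1 h2))

theorem isBB_brBisim : IsBranchingBisim tr (BrBisim tr) := by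
  refine ⟨fun _ _ => brBisim_symm, fun s1 s2 h a s1' ht => ?_⟩
  rcases isBB_semiBisim.2 s1 s2 (brBisim_iff_semi.1 h) a s1' ht with
    ⟨rfl, hb⟩ | ⟨b, c, d, e, f, g⟩
  · exact .inl ⟨rfl, brBisim_iff_semi.2 hb⟩
  · exact .inr ⟨b, c, d, e, brBisim_iff_semi.2 f, brBisim_iff_semi.2 g⟩

theorem tauStar_reach {s s' : S} (h : TauStar tr s s') : Reach tr s s' :=
  Relation.ReflTransGen.mono (p := fun s s' => ∃ a, tr s a s') (fun _ _ h => ⟨none, h⟩) _ _ h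

theorem reach_transfer {s1 s2 s1' : S} (h : BrBisim tr s1 s2) (hr : Reach tr s1 s1') :
    ∃ s2', Reach tr s2 s2' ∧ BrBisim tr s1' s2' := by
  induction hr with
  | refl => exact ⟨s2, .refl, h⟩
  | tail _ hstep ih =>
      obtain ⟨t, hrt, hbt⟩ := ih
      obtain ⟨a, hs⟩ := hstep
      rcases isBB_brBisim.2 _ _ hbt a _ hs with ⟨_, hb⟩ | ⟨tb, t', c1, c2, _, c4⟩
      · exact ⟨t, hrt, hb⟩
      · exact ⟨t', (hrt.trans (tauStar_reach c1)).tail ⟨a, c2⟩, c4⟩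

end BBTheory

/-! ### Congruence properties of branching bisimilarity -/

section Cong

variable {A C : Type} {env : C → Proc A C}

theorem tauStar_restrict {p q : Proc A C} {L : Set A} (h : TauStar (Trans env) p q) :
    TauStar (Trans env) (.restrict p L) (.restrict q L) :=
  Relation.ReflTransGen.lift (p := fun s s' => Trans env s none s') (fun x => Proc.restrict x L)
    (fun _ _ ht => Trans.res ht (fun _ hx => nomatch hx)) _ _ h

theorem tauStar_hide {p q : Proc A C} {L : Set A} (h : TauStar (Trans env) p q) :
    TauStar (Trans env) (.hide p L) (.hide q L) :=
  Relation.ReflTransGen.lift (p := fun s s' => Trans env s none s') (fun x => Proc.hide x L)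
    (fun _ _ ht => Trans.hideOut ht (fun _ hx => nomatch hx)) _ _ h

theorem tauStar_parL {p q r : Proc A C} {L : Set A} (h : TauStar (Trans env) p q) :
    TauStar (Trans env) (.par L p r) (.par L q r) :=
  Relation.ReflTransGen.lift (p := fun s s' => Trans env s none s') (fun x => Proc.par L x r)
    (fun _ _ ht => Trans.parL ht (fun _ hx => nomatch hx)) _ _ h

theorem brBisim_restrict {p q : Proc A C} (L : Set A) (h : BrBisim (Trans env) p q) :
    BrBisim (Trans env) (.restrict p L) (.restrict q L) := by
  obtain ⟨B, hB, hpq⟩ := h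
  refine ⟨fun s t => ∃ p q, s = .restrict p L ∧ t = .restrict q L ∧ B p q,
    ⟨?_, ?_⟩, ⟨p, q, rfl, rfl, hpq⟩⟩
  · rintro s t ⟨p, q, rfl, rfl, hpq⟩; exact ⟨q, p, rfl, rfl, hB.1 hpq⟩
  · rintro s t ⟨p, q, rfl, rfl, hpq⟩ a s' ht
    cases ht with
    | res hp hn =>
        rcases hB.2 _ _ hpq _ _ hp with ⟨rfl, hb⟩ | ⟨qb, q', c1, c2, c3, c4⟩
        · exact .inl ⟨rfl, _, _, rfl, rfl, hb⟩
        · exact .inr ⟨.restrict qb L, .restrict q' L, tauStar_restrict c1,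
            .res c2 hn, ⟨_, _, rfl, rfl, c3⟩, ⟨_, _, rfl, rfl, c4⟩⟩

theorem brBisim_hide {p q : Proc A C} (L : Set A) (h : BrBisim (Trans env) p q) :
    BrBisim (Trans env) (.hide p L) (.hide q L) := by
  obtain ⟨B, hB, hpq⟩ := h
  refine ⟨fun s t => ∃ p q, s = .hide p L ∧ t = .hide q L ∧ B p q,
    ⟨?_, ?_⟩, ⟨p, q, rfl, rfl, hpq⟩⟩
  · rintro s t ⟨p, q, rfl, rfl, hpq⟩; exact ⟨q, p, rfl, rfl, hB.1 hpq⟩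
  · rintro s t ⟨p, q, rfl, rfl, hpq⟩ a s' ht
    cases ht with
    | hideIn hp hx =>
        rcases hB.2 _ _ hpq _ _ hp with ⟨h1, _⟩ | ⟨qb, q', c1, c2, c3, c4⟩
        · exact absurd h1 (by simp)
        · exact .inr ⟨.hide qb L, .hide q' L, tauStar_hide c1, .hideIn c2 hx,
            ⟨_, _, rfl, rfl, c3⟩, ⟨_, _, rfl, rfl, c4⟩⟩
    | hideOut hp hn =>
        rcases hB.2 _ _ hpq _ _ hp with ⟨rfl, hb⟩ | ⟨qb, q', c1, c2, c3, c4⟩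
        · exact .inl ⟨rfl, _, _, rfl, rfl, hb⟩
        · exact .inr ⟨.hide qb L, .hide q' L, tauStar_hide c1, .hideOut c2 hn,
            ⟨_, _, rfl, rfl, c3⟩, ⟨_, _, rfl, rfl, c4⟩⟩

theorem brBisim_parL {p q : Proc A C} (L : Set A) (r : Proc A C)
    (h : BrBisim (Trans env) p q) :
    BrBisim (Trans env) (.par L p r) (.par L q r) := by
  obtain ⟨B, hB, hpq⟩ := h
  refine ⟨fun s t => ∃ p q r, s = .par L p r ∧ t = .par L q r ∧ B p q,
    ⟨?_, ?_⟩, ⟨p, q, r, rfl, rfl, hpq⟩⟩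
  · rintro s t ⟨p, q, r, rfl, rfl, hpq⟩; exact ⟨q, p, r, rfl, rfl, hB.1 hpq⟩
  · rintro s t ⟨p, q, r, rfl, rfl, hpq⟩ a s' ht
    cases ht with
    | parL hp hn =>
        rcases hB.2 _ _ hpq _ _ hp with ⟨rfl, hb⟩ | ⟨qb, q', c1, c2, c3, c4⟩
        · exact .inl ⟨rfl, _, _, _, rfl, rfl, hb⟩
        · exact .inr ⟨.par L qb r, .par L q' r, tauStar_parL c1, .parL c2 hn,
            ⟨_, _, _, rfl, rfl, c3⟩, ⟨_, _, _, rfl, rfl, c4⟩⟩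
    | parR hr hn =>
        exact .inr ⟨.par L q r, _, .refl, .parR hr hn, ⟨_, _, _, rfl, rfl, hpq⟩,
          ⟨_, _, _, rfl, rfl, hpq⟩⟩
    | sync hp hr hx =>
        rcases hB.2 _ _ hpq _ _ hp with ⟨h1, _⟩ | ⟨qb, q', c1, c2, c3, c4⟩
        · exact absurd h1 (by simp)
        · exact .inr ⟨.par L qb r, .par L q' _, tauStar_parL c1, .sync c2 hr hx,
            ⟨_, _, _, rfl, rfl, c3⟩, ⟨_, _, _, rfl, rfl, c4⟩⟩

/-! ### Transfer of the security properties -/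

theorem brSNNI_of (AH : Set A) {P1 P2 : Proc A C} (h : BrBisim (Trans env) P1 P2)
    (h2 : BrSNNI env AH P2) : BrSNNI env AH P1 :=
  brBisim_trans (brBisim_restrict AH h)
    (brBisim_trans h2 (brBisim_hide AH (brBisim_symm h)))

theorem brNDC_of (AH : Set A) {P1 P2 : Proc A C} (h : BrBisim (Trans env) P1 P2)
    (h2 : BrNDC env AH P2) : BrNDC env AH P1 := by
  intro q hq L hL
  refine brBisim_trans (brBisim_restrict AH h) (brBisim_trans (h2 q hq L hL) ?_)
  exact brBisim_restrict AH (brBisim_hide L (brBisim_parL L q (brBisim_symm h)))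

theorem sBrSNNI_of (AH : Set A) {P1 P2 : Proc A C} (h : BrBisim (Trans env) P1 P2)
    (h2 : SBrSNNI env AH P2) : SBrSNNI env AH P1 := by
  intro p' hr
  obtain ⟨p2', hr2, hb⟩ := reach_transfer h hr
  exact brSNNI_of AH hb (h2 p2' hr2)

theorem pBrNDC_of (AH : Set A) {P1 P2 : Proc A C} (h : BrBisim (Trans env) P1 P2)
    (h2 : PBrNDC env AH P2) : PBrNDC env AH P1 := by
  intro p' hr
  obtain ⟨p2', hr2, hb⟩ := reach_transfer h hr
  exact brNDC_of AH hb (h2 p2' hr2)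

theorem sBrNDC_of (AH : Set A) {P1 P2 : Proc A C} (h : BrBisim (Trans env) P1 P2)
    (h2 : SBrNDC env AH P2) : SBrNDC env AH P1 := by
  intro p' p'' hr hact hmem ht
  obtain ⟨q', hr2, hb⟩ := reach_transfer h hr
  rcases isBB_brBisim.2 _ _ hb _ _ ht with ⟨h1, _⟩ | ⟨qb, q'', c1, c2, c3, c4⟩
  · exact absurd h1 (by simp)
  · have hq : Reach (Trans env) P2 qb := hr2.trans (tauStar_reach c1)
    have hmain := h2 qb q'' hq hact hmem c2
    exact brBisim_trans (brBisim_restrict AH c3)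
      (brBisim_trans hmain (brBisim_restrict AH (brBisim_symm c4)))

end Cong


/-- each branching-bisimilarity-based noninterference property
(BrSNNI, BrNDC, SBrSNNI, P_BrNDC, SBrNDC) is preserved by branching
bisimilarity. -/
theorem preservation_by_brBisim {A C : Type} (env : C → Proc A C)
    (hguard : ∀ c, Guarded (env c)) (AH : Set A) (P1 P2 : Proc A C)
    (h : BrBisim (Trans env) P1 P2) :
    (BrSNNI env AH P1 ↔ BrSNNI env AH P2) ∧
    (BrNDC env AH P1 ↔ BrNDC env AH P2) ∧
    (SBrSNNI env AH P1 ↔ SBrSNNI env AH P2) ∧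
    (PBrNDC env AH P1 ↔ PBrNDC env AH P2) ∧
    (SBrNDC env AH P1 ↔ SBrNDC env AH P2) := by
  have hs := brBisim_symm h
  exact ⟨⟨fun hp => brSNNI_of AH hs hp, fun hp => brSNNI_of AH h hp⟩,
    ⟨fun hp => brNDC_of AH hs hp, fun hp => brNDC_of AH h hp⟩,
    ⟨fun hp => sBrSNNI_of AH hs hp, fun hp => sBrSNNI_of AH h hp⟩,
    ⟨fun hp => pBrNDC_of AH hs hp, fun hp => pBrNDC_of AH h hp⟩,
    ⟨fun hp => sBrNDC_of AH hs hp, fun hp => sBrNDC_of AH h hp⟩⟩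

end SecurityNI
end

section
/- If P1, P2 ∈ SBrSNNI and L ⊆ A_L, then (Q1 ∥_L Q2)∖A_H ≈_b (R1 ∥_L R2)/A_H for all Q1, R1 ∈ reach(P1) and Q2, R2 ∈ reach(P2) such that Q1 ∥_L Q2 and R1 ∥_L R2 belong to reach(P1 ∥_L P2), Q1∖A_H ≈_b R1/A_H, and Q2∖A_H ≈_b R2/A_H. -/
/-! Restricting or hiding `A_H` on `P ∥_L Q` yields a process whose moves are exactly the moves of
`P∖A_H` (resp. `P/A_H`) or `Q∖A_H` (resp. `Q/A_H`) outside `L`, or synchronised moves of both on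
`L`; for hiding this needs `L ∩ A_H = ∅`, so that a hidden action never has to synchronise. For two
such compositions, the pairs whose components are pairwise branching bisimilar then form a
branching bisimulation: each move of one side is split into component moves, each answered by the
corresponding component bisimulation, and the answers recombine. -/

namespace SecurityNI

variable {A C : Type}

section Branching

variable {S : Type} {tr : S → Option A → S → Prop}

variable (tr) in
def IsBranchingSim (B : S → S → Prop) : Prop :=
  ∀ s1 s2, B s1 s2 → ∀ a s1', tr s1 a s1' →
    (a = none ∧ B s1' s2) ∨
    (∃ s2b s2', TauStar tr s2 s2b ∧ tr s2b a s2' ∧ B s1 s2b ∧ B s1' s2')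

theorem BrBisim.symm {s t : S} : BrBisim tr s t → BrBisim tr t s
  | ⟨B, hB, h⟩ => ⟨B, hB, hB.1 h⟩

theorem isBranchingSim_brBisim : IsBranchingSim tr (BrBisim tr) := by
  rintro s1 s2 ⟨B, hB, h⟩ a s1' hs
  rcases hB.2 s1 s2 h a s1' hs with ⟨rfl, h'⟩ | ⟨s2b, s2', hτ, hstep, hb, h'⟩
  · exact Or.inl ⟨rfl, B, hB, h'⟩
  · exact Or.inr ⟨s2b, s2', hτ, hstep, ⟨B, hB, hb⟩, ⟨B, hB, h'⟩⟩

theorem isBranchingBisim_or {B B' : S → S → Prop} (h : IsBranchingSim tr B)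
    (h' : IsBranchingSim tr B') (hB : ∀ s t, B s t → B' t s) (hB' : ∀ s t, B' s t → B t s) :
    IsBranchingBisim tr (fun s t => B s t ∨ B' s t) := by
  refine ⟨fun s t hst => hst.elim (Or.inr ∘ hB s t) (Or.inl ∘ hB' s t), ?_⟩
  rintro s1 s2 (hst | hst) a s1' hs
  · rcases h s1 s2 hst a s1' hs with ⟨rfl, h1⟩ | ⟨s2b, s2', hτ, hstep, hb, h1⟩
    · exact Or.inl ⟨rfl, Or.inl h1⟩
    · exact Or.inr ⟨s2b, s2', hτ, hstep, Or.inl hb, Or.inl h1⟩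
  · rcases h' s1 s2 hst a s1' hs with ⟨rfl, h1⟩ | ⟨s2b, s2', hτ, hstep, hb, h1⟩
    · exact Or.inl ⟨rfl, Or.inr h1⟩
    · exact Or.inr ⟨s2b, s2', hτ, hstep, Or.inr hb, Or.inr h1⟩

end Branching

section ParContext

variable {S P : Type} {tr : S → Option A → S → Prop} {L : Set A}

variable (tr L) in
/-- `F p q` plays the role of `G (p ∥_L q)`, as `(p ∥_L q)∖A_H` does for `G = ·∖A_H`. -/
structure IsParContext (G : P → S) (F : P → P → S) : Prop where
  step_iff : ∀ p q a s, tr (F p q) a s ↔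
    (∃ p', tr (G p) a (G p') ∧ (∀ x, a = some x → x ∉ L) ∧ s = F p' q) ∨
    (∃ q', tr (G q) a (G q') ∧ (∀ x, a = some x → x ∉ L) ∧ s = F p q') ∨
    (∃ x p' q', a = some x ∧ x ∈ L ∧ tr (G p) a (G p') ∧ tr (G q) a (G q') ∧ s = F p' q')
  exists_eq_of_step : ∀ p a s, tr (G p) a s → ∃ p', s = G p'

variable (tr) in
def ParRel (G₁ : P → S) (F₁ : P → P → S) (G₂ : P → S) (F₂ : P → P → S) (s t : S) : Prop :=
  ∃ p₁ p₂ r₁ r₂, s = F₁ p₁ p₂ ∧ t = F₂ r₁ r₂ ∧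
    BrBisim tr (G₁ p₁) (G₂ r₁) ∧ BrBisim tr (G₁ p₂) (G₂ r₂)

variable {G G₁ G₂ : P → S} {F F₁ F₂ : P → P → S}

theorem ParRel.symm {s t : S} : ParRel tr G₁ F₁ G₂ F₂ s t → ParRel tr G₂ F₂ G₁ F₁ t s
  | ⟨p₁, p₂, r₁, r₂, hs, ht, hb₁, hb₂⟩ => ⟨r₁, r₂, p₁, p₂, ht, hs, hb₁.symm, hb₂.symm⟩

namespace IsParContext

theorem swap (h : IsParContext tr L G F) : IsParContext tr L G (fun p q => F q p) := by
  refine ⟨fun p q a s => ?_, h.exists_eq_of_step⟩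
  rw [h.step_iff]
  constructor
  · rintro (hl | hr | ⟨x, p', q', hx, hxL, hp, hq, rfl⟩)
    exacts [Or.inr (Or.inl hl), Or.inl hr, Or.inr (Or.inr ⟨x, q', p', hx, hxL, hq, hp, rfl⟩)]
  · rintro (hl | hr | ⟨x, p', q', hx, hxL, hp, hq, rfl⟩)
    exacts [Or.inr (Or.inl hl), Or.inl hr, Or.inr (Or.inr ⟨x, q', p', hx, hxL, hq, hp, rfl⟩)]

theorem tauStar_left (h : IsParContext tr L G F) (q : P) {p : P} {s : S}
    (hs : TauStar tr (G p) s) : ∃ p', s = G p' ∧ TauStar tr (F p q) (F p' q) := by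
  induction hs with
  | refl => exact ⟨p, rfl, .refl⟩
  | tail _ hstep ih =>
    obtain ⟨p', rfl, hτ⟩ := ih
    obtain ⟨p'', rfl⟩ := h.exists_eq_of_step _ _ _ hstep
    exact ⟨p'', rfl, hτ.tail ((h.step_iff _ _ _ _).2 (Or.inl ⟨p'', hstep, nofun, rfl⟩))⟩

theorem respond_left (h : IsParContext tr L G F) (q : P) {u u' : S} {r : P} {a : Option A}
    (hb : BrBisim tr u (G r)) (hs : tr u a u') :
    (a = none ∧ BrBisim tr u' (G r)) ∨
    ∃ rb r', TauStar tr (F r q) (F rb q) ∧ tr (G rb) a (G r') ∧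
      BrBisim tr u (G rb) ∧ BrBisim tr u' (G r') := by
  rcases isBranchingSim_brBisim u _ hb a u' hs with h' | ⟨sb, s', hτ, hstep, hbb, hb'⟩
  · exact Or.inl h'
  obtain ⟨rb, rfl, hτ'⟩ := h.tauStar_left q hτ
  obtain ⟨r', rfl⟩ := h.exists_eq_of_step _ _ _ hstep
  exact Or.inr ⟨rb, r', hτ', hstep, hbb, hb'⟩

theorem respond_right (h : IsParContext tr L G F) (p : P) {u u' : S} {r : P} {a : Option A}
    (hb : BrBisim tr u (G r)) (hs : tr u a u') :
    (a = none ∧ BrBisim tr u' (G r)) ∨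
    ∃ rb r', TauStar tr (F p r) (F p rb) ∧ tr (G rb) a (G r') ∧
      BrBisim tr u (G rb) ∧ BrBisim tr u' (G r') :=
  h.swap.respond_left p hb hs

theorem isBranchingSim_parRel (h₁ : IsParContext tr L G₁ F₁) (h₂ : IsParContext tr L G₂ F₂) :
    IsBranchingSim tr (ParRel tr G₁ F₁ G₂ F₂) := by
  rintro _ _ ⟨p₁, p₂, r₁, r₂, rfl, rfl, hb₁, hb₂⟩ a s' hs
  rcases (h₁.step_iff _ _ _ _).1 hs with ⟨p₁', hs₁, ha, rfl⟩ | ⟨p₂', hs₂, ha, rfl⟩ |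
      ⟨x, p₁', p₂', rfl, hx, hs₁, hs₂, rfl⟩
  · rcases h₂.respond_left r₂ hb₁ hs₁ with ⟨rfl, hb⟩ | ⟨rb, r', hτ, hstep, hbb, hb'⟩
    · exact Or.inl ⟨rfl, _, _, _, _, rfl, rfl, hb, hb₂⟩
    · exact Or.inr ⟨_, _, hτ, (h₂.step_iff _ _ _ _).2 (Or.inl ⟨r', hstep, ha, rfl⟩),
        ⟨_, _, _, _, rfl, rfl, hbb, hb₂⟩, ⟨_, _, _, _, rfl, rfl, hb', hb₂⟩⟩
  · rcases h₂.respond_right r₁ hb₂ hs₂ with ⟨rfl, hb⟩ | ⟨rb, r', hτ, hstep, hbb, hb'⟩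
    · exact Or.inl ⟨rfl, _, _, _, _, rfl, rfl, hb₁, hb⟩
    · exact Or.inr ⟨_, _, hτ, (h₂.step_iff _ _ _ _).2 (Or.inr (Or.inl ⟨r', hstep, ha, rfl⟩)),
        ⟨_, _, _, _, rfl, rfl, hb₁, hbb⟩, ⟨_, _, _, _, rfl, rfl, hb₁, hb'⟩⟩
  · obtain ⟨r₁b, r₁', hτ₁, hstep₁, hbb₁, hb₁'⟩ :=
      (h₂.respond_left r₂ hb₁ hs₁).resolve_left (nomatch ·.1)
    obtain ⟨r₂b, r₂', hτ₂, hstep₂, hbb₂, hb₂'⟩ :=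
      (h₂.respond_right r₁b hb₂ hs₂).resolve_left (nomatch ·.1)
    exact Or.inr ⟨_, _, hτ₁.trans hτ₂,
      (h₂.step_iff _ _ _ _).2 (Or.inr (Or.inr ⟨x, r₁', r₂', rfl, hx, hstep₁, hstep₂, rfl⟩)),
      ⟨_, _, _, _, rfl, rfl, hbb₁, hbb₂⟩, ⟨_, _, _, _, rfl, rfl, hb₁', hb₂'⟩⟩

theorem brBisim_of_brBisim (h₁ : IsParContext tr L G₁ F₁) (h₂ : IsParContext tr L G₂ F₂)
    {p₁ p₂ r₁ r₂ : P} (hb₁ : BrBisim tr (G₁ p₁) (G₂ r₁)) (hb₂ : BrBisim tr (G₁ p₂) (G₂ r₂)) :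
    BrBisim tr (F₁ p₁ p₂) (F₂ r₁ r₂) :=
  ⟨_, isBranchingBisim_or (h₁.isBranchingSim_parRel h₂) (h₂.isBranchingSim_parRel h₁)
    (fun _ _ => ParRel.symm) (fun _ _ => ParRel.symm), Or.inl ⟨p₁, p₂, r₁, r₂, rfl, rfl, hb₁, hb₂⟩⟩

end IsParContext

end ParContext

section Operators

variable {env : C → Proc A C} {p q s : Proc A C} {a : Option A} {L M : Set A}
  {P : Type} {G : P → Proc A C} {F : P → P → Proc A C}

theorem trans_restrict_iff : Trans env (.restrict p M) a s ↔
    ∃ p', Trans env p a p' ∧ (∀ x, a = some x → x ∉ M) ∧ s = .restrict p' M := by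
  constructor
  · intro h
    cases h with
    | res h hn => exact ⟨_, h, hn, rfl⟩
  · rintro ⟨p', h, hn, rfl⟩
    exact .res h hn

theorem trans_hide_iff : Trans env (.hide p M) a s ↔
    ∃ p', s = .hide p' M ∧ ((Trans env p a p' ∧ ∀ x, a = some x → x ∉ M) ∨
      (a = none ∧ ∃ x ∈ M, Trans env p (some x) p')) := by
  constructor
  · intro h
    cases h with
    | hideIn h hx => exact ⟨_, rfl, Or.inr ⟨rfl, _, hx, h⟩⟩
    | hideOut h hn => exact ⟨_, rfl, Or.inl ⟨h, hn⟩⟩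
  · rintro ⟨p', rfl, ⟨h, hn⟩ | ⟨rfl, x, hx, h⟩⟩
    exacts [.hideOut h hn, .hideIn h hx]

theorem trans_par_iff : Trans env (.par L p q) a s ↔
    (∃ p', Trans env p a p' ∧ (∀ x, a = some x → x ∉ L) ∧ s = .par L p' q) ∨
    (∃ q', Trans env q a q' ∧ (∀ x, a = some x → x ∉ L) ∧ s = .par L p q') ∨
    (∃ x p' q', a = some x ∧ x ∈ L ∧ Trans env p a p' ∧ Trans env q a q' ∧
      s = .par L p' q') := by
  constructor
  · intro h
    cases h with
    | parL h hn => exact Or.inl ⟨_, h, hn, rfl⟩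
    | parR h hn => exact Or.inr (Or.inl ⟨_, h, hn, rfl⟩)
    | sync h₁ h₂ hx => exact Or.inr (Or.inr ⟨_, _, _, rfl, hx, h₁, h₂, rfl⟩)
  · rintro (⟨p', h, hn, rfl⟩ | ⟨q', h, hn, rfl⟩ | ⟨x, p', q', rfl, hx, h₁, h₂, rfl⟩)
    exacts [.parL h hn, .parR h hn, .sync h₁ h₂ hx]

variable (env L) in
theorem isParContext_par : IsParContext (Trans env) L id (Proc.par L) :=
  ⟨fun _ _ _ _ => trans_par_iff, fun _ _ s _ => ⟨s, rfl⟩⟩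

theorem IsParContext.restrict (h : IsParContext (Trans env) L G F) (M : Set A) :
    IsParContext (Trans env) L (fun p => .restrict (G p) M) (fun p q => .restrict (F p q) M) := by
  refine ⟨fun p q a s => ?_, fun p a s hs => ?_⟩
  · simp only [trans_restrict_iff, h.step_iff, Proc.restrict.injEq]
    aesop
  · obtain ⟨s', hs', -, rfl⟩ := trans_restrict_iff.1 hs
    obtain ⟨p', rfl⟩ := h.exists_eq_of_step _ _ _ hs'
    exact ⟨p', rfl⟩

theorem trans_hide_hide_iff {p' : Proc A C} : Trans env (.hide p M) a (.hide p' M) ↔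
    (Trans env p a p' ∧ ∀ x, a = some x → x ∉ M) ∨ (a = none ∧ ∃ x ∈ M, Trans env p (some x) p') := by
  simp only [trans_hide_iff, Proc.hide.injEq, and_true, exists_eq_left']

theorem IsParContext.hide (h : IsParContext (Trans env) L G F) (hLM : ∀ x ∈ L, x ∉ M) :
    IsParContext (Trans env) L (fun p => .hide (G p) M) (fun p q => .hide (F p q) M) := by
  have hidden_avoids {x : A} (hx : x ∈ M) : ∀ y, some x = some y → y ∉ L := by
    rintro _ ⟨⟩ hxL
    exact hLM x hxL hx
  refine ⟨fun p q a s => ⟨?_, ?_⟩, fun p a s hs => ?_⟩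
  · rw [trans_hide_iff]
    rintro ⟨s', rfl, ⟨hs, haM⟩ | ⟨rfl, x, hxM, hs⟩⟩
    · rcases (h.step_iff _ _ _ _).1 hs with ⟨p', hp, haL, rfl⟩ | ⟨q', hq, haL, rfl⟩ |
          ⟨x, p', q', rfl, hx, hp, hq, rfl⟩
      exacts [Or.inl ⟨p', .hideOut hp haM, haL, rfl⟩,
        Or.inr (Or.inl ⟨q', .hideOut hq haM, haL, rfl⟩),
        Or.inr (Or.inr ⟨x, p', q', rfl, hx, .hideOut hp haM, .hideOut hq haM, rfl⟩)]
    · rcases (h.step_iff _ _ _ _).1 hs with ⟨p', hp, -, rfl⟩ | ⟨q', hq, -, rfl⟩ |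
          ⟨y, p', q', hxy, hyL, -, -, rfl⟩
      · exact Or.inl ⟨p', .hideIn hp hxM, nofun, rfl⟩
      · exact Or.inr (Or.inl ⟨q', .hideIn hq hxM, nofun, rfl⟩)
      · exact (hidden_avoids hxM y hxy hyL).elim
  · rintro (⟨p', hp, haL, rfl⟩ | ⟨q', hq, haL, rfl⟩ | ⟨x, p', q', rfl, hx, hp, hq, rfl⟩)
    · rcases trans_hide_hide_iff.1 hp with ⟨hp, haM⟩ | ⟨rfl, x, hxM, hp⟩
      · exact .hideOut ((h.step_iff _ _ _ _).2 (Or.inl ⟨p', hp, haL, rfl⟩)) haM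
      · exact .hideIn ((h.step_iff _ _ _ _).2 (Or.inl ⟨p', hp, hidden_avoids hxM, rfl⟩)) hxM
    · rcases trans_hide_hide_iff.1 hq with ⟨hq, haM⟩ | ⟨rfl, x, hxM, hq⟩
      · exact .hideOut ((h.step_iff _ _ _ _).2 (Or.inr (Or.inl ⟨q', hq, haL, rfl⟩))) haM
      · exact .hideIn ((h.step_iff _ _ _ _).2 (Or.inr (Or.inl ⟨q', hq, hidden_avoids hxM, rfl⟩)))
          hxM
    · obtain ⟨hp, hxM⟩ := (trans_hide_hide_iff.1 hp).resolve_right (nomatch ·.1)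
      obtain ⟨hq, -⟩ := (trans_hide_hide_iff.1 hq).resolve_right (nomatch ·.1)
      exact .hideOut ((h.step_iff _ _ _ _).2 (Or.inr (Or.inr ⟨x, p', q', rfl, hx, hp, hq, rfl⟩)))
        hxM
  · obtain ⟨s', rfl, ⟨hs', -⟩ | ⟨-, _, -, hs'⟩⟩ := trans_hide_iff.1 hs <;>
    obtain ⟨p', rfl⟩ := h.exists_eq_of_step _ _ _ hs' <;>
    exact ⟨p', rfl⟩

end Operators

theorem sbrsnni_par_restrict_hide_general {A C : Type} (env : C → Proc A C)
    (AH : Set A) (P1 P2 : Proc A C)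
    (L : Set A) (hL : ∀ x ∈ L, x ∉ AH) :
    ∀ Q1 R1 Q2 R2 : Proc A C,
      Reach (Trans env) P1 Q1 → Reach (Trans env) P1 R1 →
      Reach (Trans env) P2 Q2 → Reach (Trans env) P2 R2 →
      Reach (Trans env) (Proc.par L P1 P2) (Proc.par L Q1 Q2) →
      Reach (Trans env) (Proc.par L P1 P2) (Proc.par L R1 R2) →
      BrBisim (Trans env) (Proc.restrict Q1 AH) (Proc.hide R1 AH) →
      BrBisim (Trans env) (Proc.restrict Q2 AH) (Proc.hide R2 AH) →
      BrBisim (Trans env) (Proc.restrict (Proc.par L Q1 Q2) AH)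
        (Proc.hide (Proc.par L R1 R2) AH) := by
  intro Q1 R1 Q2 R2 _ _ _ _ _ _ hb1 hb2
  exact ((isParContext_par env L).restrict AH).brBisim_of_brBisim
    ((isParContext_par env L).hide hL) hb1 hb2

/-- Lemma 4.3(1). -/
theorem sbrsnni_par_restrict_hide {A C : Type} (env : C → Proc A C)
    (hguard : ∀ c, Guarded (env c)) (AH : Set A) (P1 P2 : Proc A C)
    (h1 : SBrSNNI env AH P1) (h2 : SBrSNNI env AH P2)
    (L : Set A) (hL : ∀ x ∈ L, x ∉ AH) :
    ∀ Q1 R1 Q2 R2 : Proc A C,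
      Reach (Trans env) P1 Q1 → Reach (Trans env) P1 R1 →
      Reach (Trans env) P2 Q2 → Reach (Trans env) P2 R2 →
      Reach (Trans env) (Proc.par L P1 P2) (Proc.par L Q1 Q2) →
      Reach (Trans env) (Proc.par L P1 P2) (Proc.par L R1 R2) →
      BrBisim (Trans env) (Proc.restrict Q1 AH) (Proc.hide R1 AH) →
      BrBisim (Trans env) (Proc.restrict Q2 AH) (Proc.hide R2 AH) →
      BrBisim (Trans env) (Proc.restrict (Proc.par L Q1 Q2) AH)
        (Proc.hide (Proc.par L R1 R2) AH) :=
  sbrsnni_par_restrict_hide_general env AH P1 P2 L hL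

end SecurityNI
end
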